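/- Let K be a field and n a positive integer. For g ∈ SL(n+1, K), written in blocks g = fromBlocks A B C d with A of size n×n, C a row vector of size 1×n, and d ∈ K the (n+1, n+1) entry, define the linear endomorphism T_g of the space of 1×n matrices by T_g(X) = lower-left (row) block of g · (fromBlocks 0 0 X 0) · g⁻¹. Then det(T_g) = d^{n+1}. -/

import Mathlib

/-!
Writing `g⁻¹ = fromBlocks A' B' C' D'`, the lower-left block of `g (fromBlocks 0 0 X 0) g⁻¹` is
`d X A'`, so `T_g` is a two-sided multiplication, a Kronecker product in vectorized coordinates,
with determinant `det d ^ n * det A'`. By Jacobi's complementary-minor identity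
`det g * det A' = det d`, so `det A' = d` when `det g = 1`.
-/

open Matrix

/-- For an invertible block matrix `g`, the endomorphism `T_g` of the space of
`l × m` matrices given by `X ↦` lower-left block of `g · (fromBlocks 0 0 X 0) · g⁻¹`. -/
noncomputable def lowerLeftConj {K : Type*} [Field K] {m l : Type*} [Fintype m] [Fintype l]
    [DecidableEq m] [DecidableEq l] (g : Matrix (m ⊕ l) (m ⊕ l) K) :
    Matrix l m K →ₗ[K] Matrix l m K where
  toFun X := (g * fromBlocks 0 0 X 0 * g⁻¹).toBlocks₂₁
  map_add' X Y := by
    show (g * fromBlocks 0 0 (X + Y) 0 * g⁻¹).toBlocks₂₁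
        = (g * fromBlocks 0 0 X 0 * g⁻¹).toBlocks₂₁ + (g * fromBlocks 0 0 Y 0 * g⁻¹).toBlocks₂₁
    have h : fromBlocks (0 : Matrix m m K) (0 : Matrix m l K) (X + Y) (0 : Matrix l l K)
        = fromBlocks 0 0 X 0 + fromBlocks 0 0 Y 0 := by
      rw [Matrix.fromBlocks_add]; simp
    rw [h, Matrix.mul_add, Matrix.add_mul]
    ext i j
    simp [Matrix.toBlocks₂₁]
  map_smul' c X := by
    show (g * fromBlocks 0 0 (c • X) 0 * g⁻¹).toBlocks₂₁
        = c • (g * fromBlocks 0 0 X 0 * g⁻¹).toBlocks₂₁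
    have h : fromBlocks (0 : Matrix m m K) (0 : Matrix m l K) (c • X) (0 : Matrix l l K)
        = c • fromBlocks 0 0 X 0 := by
      rw [Matrix.fromBlocks_smul]; simp
    rw [h, Matrix.mul_smul, Matrix.smul_mul]
    ext i j
    simp [Matrix.toBlocks₂₁]

namespace Matrix

variable {R : Type*} [CommRing R] {l m : Type*}

def vecLinearEquiv : Matrix l m R ≃ₗ[R] (m × l → R) where
  toFun := vec
  invFun v := of fun i j => v (j, i)
  map_add' := vec_add
  map_smul' := vec_smul
  left_inv _ := rfl
  right_inv _ := rfl

theorem vecLinearEquiv_apply (X : Matrix l m R) : vecLinearEquiv X = vec X := rfl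

open scoped Kronecker in
theorem det_mulLeftLinearMap_comp_mulRightLinearMap [Fintype l] [Fintype m] [DecidableEq l]
    [DecidableEq m] (D : Matrix l l R) (M : Matrix m m R) :
    LinearMap.det (mulLeftLinearMap m R D ∘ₗ mulRightLinearMap l R M) =
      D.det ^ Fintype.card m * M.det ^ Fintype.card l := by
  calc _ = LinearMap.det (vecLinearEquiv.toLinearMap ∘ₗ
          (mulLeftLinearMap m R D ∘ₗ mulRightLinearMap l R M) ∘ₗ vecLinearEquiv.symm.toLinearMap) :=
        (LinearMap.det_conj _ _).symm
    _ = LinearMap.det (toLin' (Mᵀ ⊗ₖ D)) := by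
        congr 1
        refine LinearMap.ext fun v => ?_
        obtain ⟨X, rfl⟩ := vecLinearEquiv.surjective v
        simp only [LinearMap.comp_apply, LinearEquiv.coe_coe, LinearEquiv.symm_apply_apply]
        simp [vecLinearEquiv_apply, kronecker_mulVec_vec, Matrix.mul_assoc]
    _ = D.det ^ Fintype.card m * M.det ^ Fintype.card l := by
        rw [LinearMap.det_toLin', det_kronecker, det_transpose, mul_comm]

theorem det_mul_det_toBlocks₁₁_inv [Fintype l] [Fintype m] [DecidableEq l] [DecidableEq m]
    (g : Matrix (m ⊕ l) (m ⊕ l) R) (hg : IsUnit g.det) :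
    g.det * (g⁻¹).toBlocks₁₁.det = g.toBlocks₂₂.det := by
  obtain ⟨A, B, C, D, rfl⟩ : ∃ A B C D, g = fromBlocks A B C D :=
    ⟨_, _, _, _, (fromBlocks_toBlocks g).symm⟩
  obtain ⟨A', B', C', D', hinv⟩ : ∃ A' B' C' D', (fromBlocks A B C D)⁻¹ = fromBlocks A' B' C' D' :=
    ⟨_, _, _, _, (fromBlocks_toBlocks _).symm⟩
  have hmul := mul_nonsing_inv (fromBlocks A B C D) hg
  rw [hinv, fromBlocks_multiply, ← fromBlocks_one, fromBlocks_inj] at hmul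
  have htriang : fromBlocks A B C D * fromBlocks A' 0 C' 1 = fromBlocks 1 B 0 D := by
    rw [fromBlocks_multiply, hmul.1, hmul.2.2.1]; simp
  have hdet := congrArg det htriang
  rw [det_mul, det_fromBlocks_zero₁₂, det_fromBlocks_zero₂₁] at hdet
  simpa [hinv] using hdet

end Matrix

theorem lowerLeftConj_eq_mulLeftLinearMap_comp_mulRightLinearMap {K : Type*} [Field K]
    {m l : Type*} [Fintype m] [Fintype l] [DecidableEq m] [DecidableEq l]
    (g : Matrix (m ⊕ l) (m ⊕ l) K) :
    lowerLeftConj g =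
      mulLeftLinearMap m K g.toBlocks₂₂ ∘ₗ mulRightLinearMap l K (g⁻¹).toBlocks₁₁ := by
  obtain ⟨A, B, C, D, rfl⟩ : ∃ A B C D, g = fromBlocks A B C D :=
    ⟨_, _, _, _, (fromBlocks_toBlocks g).symm⟩
  obtain ⟨A', B', C', D', hinv⟩ : ∃ A' B' C' D', (fromBlocks A B C D)⁻¹ = fromBlocks A' B' C' D' :=
    ⟨_, _, _, _, (fromBlocks_toBlocks _).symm⟩
  ext1 X
  simp [lowerLeftConj, hinv, fromBlocks_multiply, Matrix.mul_assoc]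

theorem det_lowerLeftConj_SL_general {K : Type*} [Field K] {n : ℕ}
    (A : Matrix (Fin n) (Fin n) K) (B : Matrix (Fin n) (Fin 1) K)
    (C : Matrix (Fin 1) (Fin n) K) (d : Matrix (Fin 1) (Fin 1) K)
    (hg : (fromBlocks A B C d).det = 1) :
    LinearMap.det (lowerLeftConj (fromBlocks A B C d)) = d 0 0 ^ (n + 1) := by
  have hA' : ((fromBlocks A B C d)⁻¹).toBlocks₁₁.det = d 0 0 := by
    simpa [hg, det_fin_one] using det_mul_det_toBlocks₁₁_inv (fromBlocks A B C d) (by simp [hg])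
  rw [lowerLeftConj_eq_mulLeftLinearMap_comp_mulRightLinearMap,
    det_mulLeftLinearMap_comp_mulRightLinearMap, toBlocks_fromBlocks₂₂, hA', det_fin_one,
    Fintype.card_fin, Fintype.card_fin, pow_one, pow_succ]

/-- Example 1.2 of the paper: for `g = fromBlocks A B C d ∈ SL(n+1, K)` (with `d` the
`1×1` lower-right block), the determinant of `T_g : X ↦` lower-left (row) block of
`g · (fromBlocks 0 0 X 0) · g⁻¹` equals `d^{n+1}`. -/
theorem det_lowerLeftConj_SL {K : Type*} [Field K] {n : ℕ} (hn : 0 < n)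
    (A : Matrix (Fin n) (Fin n) K) (B : Matrix (Fin n) (Fin 1) K)
    (C : Matrix (Fin 1) (Fin n) K) (d : Matrix (Fin 1) (Fin 1) K)
    (hg : (fromBlocks A B C d).det = 1) :
    LinearMap.det (lowerLeftConj (fromBlocks A B C d)) = d 0 0 ^ (n + 1) :=
  det_lowerLeftConj_SL_general A B C d hg
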